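/- arXiv:2501.16248 — 4 statements merged into one kernel-verified Lean document; each statement's English description precedes it below -/
import Mathlib

section
/- Let A ∈ ℝ^{n×n} be symmetric positive definite, let S ∈ ℝ^{n×n_s} and R ∈ ℝ^{n_c×n} satisfy RS = 0, SᵀS = I_s, RRᵀ = I_c and n_s + n_c = n, and set P⋆ = (I − S(SᵀAS)⁻¹SᵀA)Rᵀ. Then I − P⋆R is the A-orthogonal projection onto the range of S: (I − P⋆R)² = I − P⋆R, the range of I − P⋆R equals the column space of S, and A(I − P⋆R) = (I − P⋆R)ᵀA (A-self-adjointness). Consequently the range of P⋆ is the A-orthogonal complement of the range of S. -/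
/-!
With `M = SᵀAS`, which is positive definite because `S` has orthonormal columns, the matrix
`Q = S M⁻¹ SᵀA` satisfies `QS = S` and `SᵀAQ = SᵀA`; these make it idempotent with range
`range S`, and it is `A`-self-adjoint because `M` is symmetric. The columns of `S` and `Rᵀ`
together form an orthogonal matrix, so `SSᵀ + RᵀR = 1`; combined with `(1 - Q)S = 0` this gives
`P⋆R = (1 - Q)RᵀR = 1 - Q`, i.e. `1 - P⋆R = Q`. Finally `v` is `A`-orthogonal to `range S` iff
`SᵀAv = 0` iff `Qv = 0`, in which case `v = (1 - Q)RᵀRv = P⋆(Rv)`.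
-/

open Matrix

namespace Matrix

variable {K m k l : Type*} [Fintype m] [Fintype k] [Fintype l]

theorem forall_mem_range_mulVec_dotProduct_eq_zero_iff [CommRing K] [LinearOrder K]
    [IsStrictOrderedRing K] (S : Matrix m k K) (x : m → K) :
    (∀ w ∈ Set.range S.mulVec, w ⬝ᵥ x = 0) ↔ Sᵀ *ᵥ x = 0 := by
  have hdot (y : k → K) : S *ᵥ y ⬝ᵥ x = y ⬝ᵥ Sᵀ *ᵥ x := by
    rw [dotProduct_comm, dotProduct_mulVec, mulVec_transpose, dotProduct_comm]
  constructor
  · intro h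
    have := h _ ⟨Sᵀ *ᵥ x, rfl⟩
    rwa [hdot, dotProduct_self_eq_zero] at this
  · rintro h _ ⟨y, rfl⟩
    rw [hdot, h, dotProduct_zero]

theorem PosDef.isUnit_det_transpose_mul_mul [DecidableEq k] {A : Matrix m m ℝ} (hA : A.PosDef)
    {S : Matrix m k ℝ} (hS : Sᵀ * S = 1) : IsUnit (Sᵀ * A * S).det := by
  have hinj : Function.Injective S.mulVec :=
    Function.LeftInverse.injective (g := Sᵀ.mulVec) fun x => by rw [mulVec_mulVec, hS, one_mulVec]
  exact (isUnit_iff_isUnit_det _).mp (hA.conjTranspose_mul_mul_same hinj).isUnit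

theorem mul_transpose_add_transpose_mul_eq_one [CommRing K] [DecidableEq m] [DecidableEq k]
    [DecidableEq l] {S : Matrix m k K} {R : Matrix l m K} (hRS : R * S = 0) (hS : Sᵀ * S = 1)
    (hR : R * Rᵀ = 1) (hcard : Fintype.card k + Fintype.card l = Fintype.card m) :
    S * Sᵀ + Rᵀ * R = 1 := by
  have e : m ≃ k ⊕ l := Fintype.equivOfCardEq (by rw [Fintype.card_sum, hcard])
  have hSR : Sᵀ * Rᵀ = 0 := by rw [← transpose_mul, hRS, transpose_zero]
  have hrows : fromRows Sᵀ R * fromCols S Rᵀ = 1 := by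
    rw [fromRows_mul_fromCols, hS, hRS, hR, hSR, fromBlocks_one]
  rw [← fromCols_mul_fromRows, (fromCols_mul_fromRows_eq_one_comm e S Rᵀ Sᵀ R).2 hrows]

/-- Meaningful only when `SᵀAS` is invertible; otherwise `⁻¹` returns the junk value `0`. -/
noncomputable def aOrthogonalProjection [CommRing K] [DecidableEq k] (A : Matrix m m K)
    (S : Matrix m k K) : Matrix m m K :=
  S * (Sᵀ * A * S)⁻¹ * Sᵀ * A

section aOrthogonalProjection

variable [CommRing K] [DecidableEq k] {A : Matrix m m K} {S : Matrix m k K}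

theorem aOrthogonalProjection_mul_self (hM : IsUnit (Sᵀ * A * S).det) :
    aOrthogonalProjection A S * S = S := by
  simp only [aOrthogonalProjection, Matrix.mul_assoc]
  rw [← Matrix.mul_assoc Sᵀ, nonsing_inv_mul _ hM, Matrix.mul_one]

theorem transpose_mul_mul_aOrthogonalProjection (hM : IsUnit (Sᵀ * A * S).det) :
    Sᵀ * A * aOrthogonalProjection A S = Sᵀ * A := by
  simp only [aOrthogonalProjection, ← Matrix.mul_assoc]
  rw [mul_nonsing_inv _ hM, Matrix.one_mul]

theorem isIdempotentElem_aOrthogonalProjection (hM : IsUnit (Sᵀ * A * S).det) :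
    IsIdempotentElem (aOrthogonalProjection A S) :=
  calc aOrthogonalProjection A S * aOrthogonalProjection A S
      = S * (Sᵀ * A * S)⁻¹ * (Sᵀ * A * aOrthogonalProjection A S) := by
        nth_rw 1 [aOrthogonalProjection]
        simp only [Matrix.mul_assoc]
    _ = aOrthogonalProjection A S := by
        rw [transpose_mul_mul_aOrthogonalProjection hM, aOrthogonalProjection]
        simp only [Matrix.mul_assoc]

theorem range_mulVec_aOrthogonalProjection (hM : IsUnit (Sᵀ * A * S).det) :
    Set.range (aOrthogonalProjection A S).mulVec = Set.range S.mulVec := by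
  apply le_antisymm
  · rintro _ ⟨v, rfl⟩
    refine ⟨((Sᵀ * A * S)⁻¹ * Sᵀ * A) *ᵥ v, ?_⟩
    rw [mulVec_mulVec, aOrthogonalProjection]
    simp only [Matrix.mul_assoc]
  · rintro _ ⟨y, rfl⟩
    exact ⟨S *ᵥ y, by rw [mulVec_mulVec, aOrthogonalProjection_mul_self hM]⟩

theorem mul_aOrthogonalProjection_eq_transpose_mul (hA : Aᵀ = A) :
    A * aOrthogonalProjection A S = (aOrthogonalProjection A S)ᵀ * A := by
  simp only [aOrthogonalProjection, transpose_mul, transpose_nonsing_inv, hA,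
    transpose_transpose, Matrix.mul_assoc]

theorem mulVec_aOrthogonalProjection_eq_zero_iff (hM : IsUnit (Sᵀ * A * S).det) (v : m → K) :
    aOrthogonalProjection A S *ᵥ v = 0 ↔ Sᵀ *ᵥ (A *ᵥ v) = 0 := by
  have hQ : aOrthogonalProjection A S = S * (Sᵀ * A * S)⁻¹ * (Sᵀ * A) := by
    simp only [aOrthogonalProjection, Matrix.mul_assoc]
  constructor
  · intro h
    rw [mulVec_mulVec, ← transpose_mul_mul_aOrthogonalProjection hM, ← mulVec_mulVec, h,
      mulVec_zero]
  · intro h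
    rw [hQ, ← mulVec_mulVec, ← mulVec_mulVec v Sᵀ A, h, mulVec_zero]

variable [DecidableEq m] {R : Matrix l m K}

theorem one_sub_aOrthogonalProjection_mul_transpose_mul (hM : IsUnit (Sᵀ * A * S).det)
    (hSR : S * Sᵀ + Rᵀ * R = 1) :
    (1 - aOrthogonalProjection A S) * Rᵀ * R = 1 - aOrthogonalProjection A S := by
  have hRR : Rᵀ * R = 1 - S * Sᵀ := eq_sub_of_add_eq' hSR
  have hS : (1 - aOrthogonalProjection A S) * S = 0 := by
    rw [Matrix.sub_mul, Matrix.one_mul, aOrthogonalProjection_mul_self hM, sub_self]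
  rw [Matrix.mul_assoc, hRR, Matrix.mul_sub, Matrix.mul_one, ← Matrix.mul_assoc, hS,
    Matrix.zero_mul, sub_zero]

theorem range_mulVec_one_sub_aOrthogonalProjection_mul_transpose
    (hM : IsUnit (Sᵀ * A * S).det) (hSR : S * Sᵀ + Rᵀ * R = 1) :
    Set.range ((1 - aOrthogonalProjection A S) * Rᵀ).mulVec = {v | Sᵀ *ᵥ (A *ᵥ v) = 0} := by
  ext v
  constructor
  · rintro ⟨x, rfl⟩
    rw [Set.mem_ofPred_eq, mulVec_mulVec, mulVec_mulVec, ← Matrix.mul_assoc, Matrix.mul_sub, Matrix.mul_one, transpose_mul_mul_aOrthogonalProjection hM, sub_self,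
      Matrix.zero_mul, zero_mulVec]
  · intro hv
    refine ⟨R *ᵥ v, ?_⟩
    rw [mulVec_mulVec, one_sub_aOrthogonalProjection_mul_transpose_mul hM hSR, sub_mulVec,
      one_mulVec, (mulVec_aOrthogonalProjection_eq_zero_iff hM v).2 hv, sub_zero]

end aOrthogonalProjection

end Matrix

/-- With GAMG orthogonality conditions and `P⋆` the ideal interpolation,
`I − P⋆R` is the `A`-orthogonal projection onto the range of `S`: it is idempotent,
its range is the column space of `S`, and it is `A`-self-adjoint.  Consequently
the range of `P⋆` is the `A`-orthogonal complement of the range of `S`. -/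
theorem ideal_interpolation_A_orthogonal_projection {n ns nc : ℕ}
    (A : Matrix (Fin n) (Fin n) ℝ) (hA : A.PosDef)
    (S : Matrix (Fin n) (Fin ns) ℝ) (R : Matrix (Fin nc) (Fin n) ℝ)
    (hRS : R * S = 0) (hS : Sᵀ * S = 1) (hR : R * Rᵀ = 1)
    (hdim : ns + nc = n)
    (P : Matrix (Fin n) (Fin nc) ℝ)
    (hP : P = (1 - S * (Sᵀ * A * S)⁻¹ * Sᵀ * A) * Rᵀ) :
    (1 - P * R) * (1 - P * R) = 1 - P * R ∧
    Set.range (1 - P * R).mulVec = Set.range S.mulVec ∧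
    A * (1 - P * R) = (1 - P * R)ᵀ * A ∧
    Set.range P.mulVec =
      {v : Fin n → ℝ | ∀ w ∈ Set.range S.mulVec, w ⬝ᵥ (A *ᵥ v) = 0} := by
  change P = (1 - aOrthogonalProjection A S) * Rᵀ at hP
  have hM := hA.isUnit_det_transpose_mul_mul hS
  have hSR := mul_transpose_add_transpose_mul_eq_one hRS hS hR (by simp [hdim])
  have hQ : 1 - P * R = aOrthogonalProjection A S := by
    rw [hP, one_sub_aOrthogonalProjection_mul_transpose_mul hM hSR, sub_sub_cancel]
  have hAt : Aᵀ = A := by simpa using hA.isHermitian.eq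
  refine ⟨?_, ?_, ?_, ?_⟩
  · rw [hQ]; exact (isIdempotentElem_aOrthogonalProjection hM).eq
  · rw [hQ, range_mulVec_aOrthogonalProjection hM]
  · rw [hQ, mul_aOrthogonalProjection_eq_transpose_mul hAt]
  · simp only [forall_mem_range_mulVec_dotProduct_eq_zero_iff, hP]
    exact range_mulVec_one_sub_aOrthogonalProjection_mul_transpose hM hSR
end

section
/- Let A ∈ ℝ^{n×n} be symmetric, let S ∈ ℝ^{n×n_s} be such that SᵀAS is invertible, and let R ∈ ℝ^{n_c×n}. With P⋆ = (I − S(SᵀAS)⁻¹SᵀA)Rᵀ, the Galerkin coarse operator equals the Schur complement of SᵀAS in the transformed system: P⋆ᵀAP⋆ = RARᵀ − (RAS)(SᵀAS)⁻¹(SᵀARᵀ). Moreover, if A is positive definite, S has full column rank, RS = 0 and RRᵀ = I_c, then P⋆ᵀAP⋆ is symmetric positive definite. -/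
/-!
Write `P⋆ = (1 - E) Rᵀ` with `E = S (SᵀAS)⁻¹ SᵀA`. Because `(SᵀAS)⁻¹` is a generalized inverse
of `SᵀAS`, `E` is idempotent, and symmetry of `A` makes it `A`-self-adjoint: `EᵀA = AE`. Hence
`(1 - E)ᵀ A (1 - E) = A (1 - E)`, and sandwiching between `R` and `Rᵀ` gives the Schur complement.
If `RS = 0` and `RRᵀ = 1` then `R P⋆ = 1`, so `P⋆` is injective and `P⋆ᵀAP⋆` is a congruence
of the positive definite `A` by an injective map.
-/

open Matrix

namespace Matrix

variable {l m n α : Type*} [CommRing α]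

/-- For singular `M` this still holds, since then `M⁻¹ = 0`. -/
theorem nonsing_inv_mul_mul_nonsing_inv [Fintype m] [DecidableEq m] (M : Matrix m m α) :
    M⁻¹ * M * M⁻¹ = M⁻¹ := by
  by_cases hM : IsUnit M.det
  · rw [nonsing_inv_mul _ hM, Matrix.one_mul]
  · simp [nonsing_inv_apply_not_isUnit _ hM]

theorem transpose_one_sub_mul_mul_one_sub [Fintype n] [DecidableEq n] {A E : Matrix n n α}
    (hE : IsIdempotentElem E) (hEA : Eᵀ * A = A * E) :
    (1 - E)ᵀ * A * (1 - E) = A * (1 - E) := by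
  rw [transpose_sub, transpose_one, Matrix.sub_mul, Matrix.one_mul, Matrix.sub_mul, hEA,
    Matrix.mul_assoc, ← Matrix.mul_sub, Matrix.mul_sub E, hE.eq, Matrix.mul_one, sub_self,
    sub_zero]

theorem IsSymm.transpose_mul_mul [Fintype n] {A : Matrix n n α} (hA : A.IsSymm)
    (S : Matrix n m α) : (Sᵀ * A * S).IsSymm := by
  simp [IsSymm, transpose_mul, hA.eq, Matrix.mul_assoc]

section Projection

variable [Fintype m] [Fintype n] [DecidableEq m]

theorem isIdempotentElem_mul_nonsing_inv_mul (A : Matrix n n α) (S : Matrix n m α) :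
    IsIdempotentElem (S * (Sᵀ * A * S)⁻¹ * Sᵀ * A) := by
  unfold IsIdempotentElem
  calc S * (Sᵀ * A * S)⁻¹ * Sᵀ * A * (S * (Sᵀ * A * S)⁻¹ * Sᵀ * A)
      = S * ((Sᵀ * A * S)⁻¹ * (Sᵀ * A * S) * (Sᵀ * A * S)⁻¹) * Sᵀ * A := by
        simp only [Matrix.mul_assoc]
    _ = S * (Sᵀ * A * S)⁻¹ * Sᵀ * A := by rw [nonsing_inv_mul_mul_nonsing_inv]

theorem IsSymm.transpose_mul_nonsing_inv_mul {A : Matrix n n α} (hA : A.IsSymm)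
    (S : Matrix n m α) :
    (S * (Sᵀ * A * S)⁻¹ * Sᵀ * A)ᵀ * A = A * (S * (Sᵀ * A * S)⁻¹ * Sᵀ * A) := by
  simp only [transpose_mul, transpose_transpose, hA.eq, (hA.transpose_mul_mul S).inv.eq]
  simp only [Matrix.mul_assoc]

variable [DecidableEq n]

noncomputable def idealInterpolation (A : Matrix n n α) (S : Matrix n m α) (R : Matrix l n α) :
    Matrix n l α :=
  (1 - S * (Sᵀ * A * S)⁻¹ * Sᵀ * A) * Rᵀ

theorem IsSymm.transpose_idealInterpolation_mul_mul [Fintype l] {A : Matrix n n α}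
    (hA : A.IsSymm) (S : Matrix n m α) (R : Matrix l n α) :
    (idealInterpolation A S R)ᵀ * A * idealInterpolation A S R =
      R * A * Rᵀ - R * A * S * (Sᵀ * A * S)⁻¹ * (Sᵀ * A * Rᵀ) := by
  set E := S * (Sᵀ * A * S)⁻¹ * Sᵀ * A
  have hE : (1 - E)ᵀ * A * (1 - E) = A * (1 - E) := transpose_one_sub_mul_mul_one_sub
    (isIdempotentElem_mul_nonsing_inv_mul A S) (hA.transpose_mul_nonsing_inv_mul S)
  calc (idealInterpolation A S R)ᵀ * A * idealInterpolation A S R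
      = R * ((1 - E)ᵀ * A * (1 - E)) * Rᵀ := by
        simp only [idealInterpolation, transpose_mul, transpose_transpose, Matrix.mul_assoc, E]
    _ = R * (A * (1 - E)) * Rᵀ := by rw [hE]
    _ = R * A * Rᵀ - R * A * S * (Sᵀ * A * S)⁻¹ * (Sᵀ * A * Rᵀ) := by
        simp only [E, Matrix.mul_sub, Matrix.sub_mul, Matrix.mul_one, Matrix.mul_assoc]

theorem mul_idealInterpolation_of_mul_eq_zero [Fintype l] {A : Matrix n n α} {S : Matrix n m α}
    {R : Matrix l n α} (hRS : R * S = 0) : R * idealInterpolation A S R = R * Rᵀ := by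
  simp [idealInterpolation, Matrix.mul_sub, Matrix.sub_mul, ← Matrix.mul_assoc, hRS]

end Projection

theorem mulVec_injective_of_mul_eq_one {R : Type*} [Semiring R] [Fintype n] [Fintype l]
    [DecidableEq l] {P : Matrix n l R} {L : Matrix l n R} (h : L * P = 1) :
    Function.Injective P.mulVec :=
  fun x y hxy => by simpa [mulVec_mulVec, h] using congrArg L.mulVec hxy

theorem PosDef.transpose_mul_mul_of_mul_eq_one {R : Type*} [Ring R] [PartialOrder R]
    [StarRing R] [TrivialStar R] [Fintype n] [Fintype l] [DecidableEq l] {A : Matrix n n R}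
    (hA : A.PosDef) {P : Matrix n l R} {L : Matrix l n R} (h : L * P = 1) :
    (Pᵀ * A * P).PosDef := by
  simpa only [conjTranspose_eq_transpose_of_trivial] using
    hA.conjTranspose_mul_mul_same (mulVec_injective_of_mul_eq_one h)

end Matrix

theorem ideal_interpolation_galerkin_schur_complement_general {n ns nc : ℕ}
    (A : Matrix (Fin n) (Fin n) ℝ) (hA : A.IsSymm)
    (S : Matrix (Fin n) (Fin ns) ℝ)
    (R : Matrix (Fin nc) (Fin n) ℝ)
    (P : Matrix (Fin n) (Fin nc) ℝ)
    (hP : P = (1 - S * (Sᵀ * A * S)⁻¹ * Sᵀ * A) * Rᵀ) :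
    Pᵀ * A * P = R * A * Rᵀ - (R * A * S) * (Sᵀ * A * S)⁻¹ * (Sᵀ * A * Rᵀ) ∧
    (A.PosDef → Function.Injective S.mulVec → R * S = 0 → R * Rᵀ = 1 →
      (Pᵀ * A * P).PosDef) := by
  change P = idealInterpolation A S R at hP
  subst hP
  refine ⟨hA.transpose_idealInterpolation_mul_mul S R, fun hApd _ hRS hRRt => ?_⟩
  exact hApd.transpose_mul_mul_of_mul_eq_one (L := R)
    (by rw [mul_idealInterpolation_of_mul_eq_zero hRS, hRRt])

/-- For symmetric `A` with `SᵀAS` invertible, the Galerkin coarse operator built from the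
ideal interpolation equals the Schur complement of `SᵀAS` in the transformed system:
`P⋆ᵀAP⋆ = RARᵀ − (RAS)(SᵀAS)⁻¹(SᵀARᵀ)`.  Moreover, if `A` is positive definite,
`S` has full column rank, `RS = 0` and `RRᵀ = I`, then `P⋆ᵀAP⋆` is symmetric positive
definite. -/
theorem ideal_interpolation_galerkin_schur_complement {n ns nc : ℕ}
    (A : Matrix (Fin n) (Fin n) ℝ) (hA : A.IsSymm)
    (S : Matrix (Fin n) (Fin ns) ℝ) (hSAS : IsUnit (Sᵀ * A * S))
    (R : Matrix (Fin nc) (Fin n) ℝ)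
    (P : Matrix (Fin n) (Fin nc) ℝ)
    (hP : P = (1 - S * (Sᵀ * A * S)⁻¹ * Sᵀ * A) * Rᵀ) :
    Pᵀ * A * P = R * A * Rᵀ - (R * A * S) * (Sᵀ * A * S)⁻¹ * (Sᵀ * A * Rᵀ) ∧
    (A.PosDef → Function.Injective S.mulVec → R * S = 0 → R * Rᵀ = 1 →
      (Pᵀ * A * P).PosDef) :=
  ideal_interpolation_galerkin_schur_complement_general A hA S R P hP
end

section
/- Let A ∈ ℝ^{n×n} be symmetric positive definite and M ∈ ℝ^{n×n} invertible with M + Mᵀ − A symmetric positive definite. Then the symmetrized smoother M̃ = M(M + Mᵀ − A)⁻¹Mᵀ is symmetric positive definite and dominates A in the Loewner order: xᵀM̃x ≥ xᵀAx for all x ∈ ℝⁿ (i.e., M̃ − A is positive semidefinite). -/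
/-!
With `N = M + Mᴴ - A`, substituting `Mᴴ = N - M + A` gives the identity
`M N⁻¹ Mᴴ - A = (M - A)ᴴ N⁻¹ (M - A)`. Its right side is positive semidefinite because `N⁻¹` is,
so `M̃ = A + (M̃ - A)` is positive definite and dominates `A`.
-/

open Matrix

theorem mul_mul_sub_eq_sub_mul_mul_sub {R : Type*} [Ring R] {M M' A N u : R}
    (hN : N = M + M' - A) (hu : u * N = 1) (hu' : N * u = 1) :
    M * u * M' - A = (M' - A) * u * (M - A) := by
  have hM' : M' = N - M + A := by rw [hN]; abel
  have hM'A : M' - A = N - M := by rw [hN]; abel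
  calc M * u * M' - A = M * (u * N) - M * u * M + M * u * A - A := by
        rw [hM']; noncomm_ring
    _ = (N * u) * (M - A) - M * u * (M - A) := by rw [hu, hu']; noncomm_ring
    _ = (M' - A) * u * (M - A) := by rw [hM'A]; noncomm_ring

namespace Matrix

variable {n K : Type*} [Fintype n] [DecidableEq n] [Field K] [PartialOrder K] [StarRing K]

theorem posSemidef_mul_inv_mul_conjTranspose_sub {A M : Matrix n n K}
    (hN : (M + Mᴴ - A).PosDef) : (M * (M + Mᴴ - A)⁻¹ * Mᴴ - A).PosSemidef := by
  have hA : Aᴴ = A := by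
    have := hN.isHermitian.eq
    rw [conjTranspose_sub, conjTranspose_add, conjTranspose_conjTranspose] at this
    simpa [add_comm] using this
  have hdet := (isUnit_iff_isUnit_det _).mp hN.isUnit
  rw [mul_mul_sub_eq_sub_mul_mul_sub rfl (nonsing_inv_mul _ hdet) (mul_nonsing_inv _ hdet)]
  simpa [conjTranspose_sub, hA] using hN.posSemidef.inv.conjTranspose_mul_mul_same (M - A)

end Matrix

theorem symmetrized_smoother_posdef_dominates_general {n : ℕ}
    (A M : Matrix (Fin n) (Fin n) ℝ) (hA : A.PosDef)
    (hsm : (M + Mᵀ - A).PosDef)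
    (Mt : Matrix (Fin n) (Fin n) ℝ)
    (hMt : Mt = M * (M + Mᵀ - A)⁻¹ * Mᵀ) :
    Mt.PosDef ∧ ∀ x : Fin n → ℝ, x ⬝ᵥ (A *ᵥ x) ≤ x ⬝ᵥ (Mt *ᵥ x) := by
  rw [← conjTranspose_eq_transpose_of_trivial] at hsm hMt
  have hgap : (Mt - A).PosSemidef := hMt ▸ posSemidef_mul_inv_mul_conjTranspose_sub hsm
  refine ⟨add_sub_cancel A Mt ▸ hA.add_posSemidef hgap, fun x => ?_⟩
  simpa [sub_mulVec] using hgap.dotProduct_mulVec_nonneg x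

/-- For SPD `A` and invertible `M` with `M + Mᵀ − A` symmetric positive definite, the
symmetrized smoother `M̃ = M(M + Mᵀ − A)⁻¹Mᵀ` is symmetric positive definite and
dominates `A` in the Loewner order: `xᵀM̃x ≥ xᵀAx` for all `x`. -/
theorem symmetrized_smoother_posdef_dominates {n : ℕ}
    (A M : Matrix (Fin n) (Fin n) ℝ) (hA : A.PosDef) (hM : IsUnit M)
    (hsm : (M + Mᵀ - A).PosDef)
    (Mt : Matrix (Fin n) (Fin n) ℝ)
    (hMt : Mt = M * (M + Mᵀ - A)⁻¹ * Mᵀ) :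
    Mt.PosDef ∧ ∀ x : Fin n → ℝ, x ⬝ᵥ (A *ᵥ x) ≤ x ⬝ᵥ (Mt *ᵥ x) :=
  symmetrized_smoother_posdef_dominates_general A M hA hsm Mt hMt
end

section
/- Let A ∈ ℝ^{n×n} be symmetric positive definite, M ∈ ℝ^{n×n} invertible with M + Mᵀ − A symmetric positive definite, and M̃ = M(M + Mᵀ − A)⁻¹Mᵀ. Let P ∈ ℝ^{n×n_c} have full column rank and let R ∈ ℝ^{n_c×n} satisfy RP = I_c. Define K = sup_{e≠0} ‖(I − PR)e‖_{M̃}² / ‖e‖_A², and let E_TG = (I − M⁻¹A)(I − P(PᵀAP)⁻¹PᵀA) be the two-grid error propagator. Then ‖E_TG‖_A² ≤ 1 − 1/K, where ‖E_TG‖_A denotes the operator norm induced by the A-norm. -/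
/-!
Let `v = (I − P A_c⁻¹ PᵀA) e` be the coarse-grid corrected error. It is `A`-orthogonal to the
range of `P`, so `‖v‖_A ≤ ‖e‖_A`, and the smoother satisfies
`‖(I − M⁻¹A) v‖²_A = ‖v‖²_A − ‖Av‖²_{M̃⁻¹}`. Since `PRv` lies in the range of `P`,
Cauchy–Schwarz in the `M̃`-inner product gives
`‖v‖²_A = ⟨(I − PR) v, Av⟩ ≤ ‖(I − PR) v‖_{M̃} ‖Av‖_{M̃⁻¹} ≤ √K ‖v‖_A ‖Av‖_{M̃⁻¹}`,
hence `‖E_TG e‖²_A ≤ (1 − 1/K) ‖v‖²_A ≤ (1 − 1/K) ‖e‖²_A`.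

The constant `1 − 1/K` is nonnegative because `I − PR` is a projection and `M̃ − A` is positive
semidefinite, so `K ≥ 1` unless `PR = I`; in that case `K = 0` and `1 − 1/K` is the junk value `1`.
-/

open Matrix

lemma one_sub_one_div_nonneg_of_eq_zero_or_one_le {K : ℝ} (hK : K = 0 ∨ 1 ≤ K) :
    0 ≤ 1 - 1 / K := by
  rcases hK with rfl | hK
  · norm_num
  · exact sub_nonneg.mpr ((div_le_one (by linarith)).mpr hK)

lemma sub_le_one_sub_one_div_mul {a b s K : ℝ} (ha : 0 ≤ a) (hb : 0 ≤ b) (has : a ≤ s)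
    (habK : a ^ 2 ≤ K * a * b) (hK : K = 0 ∨ 1 ≤ K) : a - b ≤ (1 - 1 / K) * s := by
  have h1K := one_sub_one_div_nonneg_of_eq_zero_or_one_le hK
  rcases hK with rfl | hK
  · rw [div_zero, sub_zero, one_mul]
    linarith
  have hK0 : 0 < K := by linarith
  have hab : a ≤ K * b := by
    rcases ha.eq_or_lt with rfl | ha
    · positivity
    · nlinarith
  calc a - b ≤ (1 - 1 / K) * a := by
        rw [one_sub_div hK0.ne', div_mul_eq_mul_div, le_div_iff₀ hK0]
        nlinarith
    _ ≤ (1 - 1 / K) * s := mul_le_mul_of_nonneg_left has h1K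

lemma sq_sSup_sqrt_div_sqrt_le {α : Type*} {p : α → Prop} {f g : α → ℝ} {c : ℝ} (hc : 0 ≤ c)
    (hg : ∀ x, p x → 0 < g x) (hfg : ∀ x, p x → f x ≤ c * g x) :
    sSup {r | ∃ x, p x ∧ r = √(f x) / √(g x)} ^ 2 ≤ c := by
  have hle : sSup {r | ∃ x, p x ∧ r = √(f x) / √(g x)} ≤ √c := by
    refine Real.sSup_le ?_ (Real.sqrt_nonneg c)
    rintro r ⟨x, hx, rfl⟩
    rw [div_le_iff₀ (Real.sqrt_pos.mpr (hg x hx)), ← Real.sqrt_mul hc]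
    exact Real.sqrt_le_sqrt (hfg x hx)
  have h0 : 0 ≤ sSup {r | ∃ x, p x ∧ r = √(f x) / √(g x)} := by
    refine Real.sSup_nonneg ?_
    rintro r ⟨x, -, rfl⟩
    positivity
  calc _ ≤ √c ^ 2 := pow_le_pow_left₀ h0 hle 2
    _ = c := Real.sq_sqrt hc

namespace Matrix

variable {m k : Type*} [Fintype m] [Fintype k]

lemma mulVec_dotProduct_mulVec_mulVec (B : Matrix m k ℝ) (C : Matrix m m ℝ) (e : k → ℝ) :
    (B *ᵥ e) ⬝ᵥ (C *ᵥ (B *ᵥ e)) = e ⬝ᵥ ((Bᵀ * C * B) *ᵥ e) := by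
  rw [dotProduct_comm, ← dotProduct_transpose_mulVec, mulVec_mulVec, mulVec_mulVec,
    Matrix.mul_assoc]

lemma IsSymm.dotProduct_mulVec_comm {B : Matrix m m ℝ} (hB : B.IsSymm) (x y : m → ℝ) :
    x ⬝ᵥ (B *ᵥ y) = y ⬝ᵥ (B *ᵥ x) := by
  rw [← dotProduct_transpose_mulVec, hB.eq]

lemma PosSemidef.dotProduct_mulVec_sq_le {B : Matrix m m ℝ} (hB : B.PosSemidef) (x y : m → ℝ) :
    (x ⬝ᵥ (B *ᵥ y)) ^ 2 ≤ (x ⬝ᵥ (B *ᵥ x)) * (y ⬝ᵥ (B *ᵥ y)) := by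
  have hsymm := (isHermitian_iff_isSymm.mp hB.isHermitian).dotProduct_mulVec_comm y x
  have hquad : ∀ t : ℝ, 0 ≤ (y ⬝ᵥ (B *ᵥ y)) * (t * t) + (2 * (x ⬝ᵥ (B *ᵥ y))) * t
      + (x ⬝ᵥ (B *ᵥ x)) := fun t => by
    have h : 0 ≤ (x + t • y) ⬝ᵥ (B *ᵥ (x + t • y)) := hB.dotProduct_mulVec_nonneg _
    simp only [mulVec_add, mulVec_smul, dotProduct_add, add_dotProduct,
      dotProduct_smul, smul_dotProduct, smul_eq_mul, hsymm] at h
    linarith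
  have hdisc := discrim_le_zero hquad
  rw [discrim] at hdisc
  nlinarith

lemma PosDef.dotProduct_sq_le_mul_inv [DecidableEq m] {B : Matrix m m ℝ} (hB : B.PosDef)
    (x y : m → ℝ) :
    (x ⬝ᵥ y) ^ 2 ≤ (x ⬝ᵥ (B *ᵥ x)) * (y ⬝ᵥ (B⁻¹ *ᵥ y)) := by
  have hBinv : B * B⁻¹ = 1 := B.mul_nonsing_inv ((isUnit_iff_isUnit_det B).mp hB.isUnit)
  have h := hB.posSemidef.dotProduct_mulVec_sq_le x (B⁻¹ *ᵥ y)
  rwa [mulVec_mulVec, hBinv, one_mulVec, dotProduct_comm (B⁻¹ *ᵥ y)] at h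

lemma dotProduct_smul_mulVec_smul (B : Matrix m m ℝ) (c : ℝ) (e : m → ℝ) :
    (c • e) ⬝ᵥ (B *ᵥ (c • e)) = c ^ 2 * (e ⬝ᵥ (B *ᵥ e)) := by
  rw [mulVec_smul, dotProduct_smul, smul_dotProduct, smul_eq_mul, smul_eq_mul]
  ring

lemma exists_ne_zero_mulVec_eq_self_of_isIdempotentElem {α : Type*} [Semiring α]
    {Q : Matrix m m α} (hQ : IsIdempotentElem Q) (hQ0 : Q ≠ 0) : ∃ e ≠ 0, Q *ᵥ e = e := by
  obtain ⟨x, hx⟩ : ∃ x, Q *ᵥ x ≠ 0 := by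
    by_contra! h
    exact hQ0 (ext_iff_mulVec.2 fun v => by rw [h, zero_mulVec])
  exact ⟨Q *ᵥ x, hx, by rw [mulVec_mulVec, hQ.eq]⟩

end Matrix

section RayleighSup

variable {m : Type*} [Fintype m]

noncomputable def rayleighSup (B A : Matrix m m ℝ) : ℝ :=
  sSup {r | ∃ e : m → ℝ, e ≠ 0 ∧ r = (e ⬝ᵥ (B *ᵥ e)) / (e ⬝ᵥ (A *ᵥ e))}

lemma bddAbove_rayleigh (B : Matrix m m ℝ) {A : Matrix m m ℝ} (hA : A.PosDef) :
    BddAbove {r | ∃ e : m → ℝ, e ≠ 0 ∧ r = (e ⬝ᵥ (B *ᵥ e)) / (e ⬝ᵥ (A *ᵥ e))} := by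
  have hcont : ContinuousOn (fun e : m → ℝ => (e ⬝ᵥ (B *ᵥ e)) / (e ⬝ᵥ (A *ᵥ e)))
      (Metric.sphere 0 1) := by
    refine ContinuousOn.div (by fun_prop) (by fun_prop) fun e he =>
      (hA.dotProduct_mulVec_pos ?_).ne'
    rintro rfl
    simp at he
  -- the quotient is scale invariant, so its range is the image of the compact unit sphere
  refine ((isCompact_sphere 0 1).image_of_continuousOn hcont).bddAbove.mono ?_
  rintro r ⟨e, he, rfl⟩
  have hne : ‖e‖⁻¹ ≠ 0 := inv_ne_zero (norm_ne_zero_iff.mpr he)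
  refine ⟨‖e‖⁻¹ • e, by simp [norm_smul, he], ?_⟩
  simp only [dotProduct_smul_mulVec_smul]
  exact mul_div_mul_left _ _ (pow_ne_zero 2 hne)

lemma dotProduct_mulVec_le_rayleighSup_mul (B : Matrix m m ℝ) {A : Matrix m m ℝ} (hA : A.PosDef)
    (e : m → ℝ) : e ⬝ᵥ (B *ᵥ e) ≤ rayleighSup B A * (e ⬝ᵥ (A *ᵥ e)) := by
  rcases eq_or_ne e 0 with rfl | he
  · simp
  have hpos : 0 < e ⬝ᵥ (A *ᵥ e) := hA.dotProduct_mulVec_pos he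
  rw [← div_le_iff₀ hpos]
  exact le_csSup (bddAbove_rayleigh B hA) ⟨e, he, rfl⟩

lemma rayleighSup_zero_left (A : Matrix m m ℝ) : rayleighSup 0 A = 0 := by
  have hS : ∀ r ∈ {r | ∃ e : m → ℝ, e ≠ 0 ∧ r = (e ⬝ᵥ ((0 : Matrix m m ℝ) *ᵥ e)) /
      (e ⬝ᵥ (A *ᵥ e))}, r = 0 := by
    rintro r ⟨e, -, rfl⟩
    simp
  exact le_antisymm (Real.sSup_nonpos fun r hr => (hS r hr).le)
    (Real.sSup_nonneg fun r hr => (hS r hr).ge)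

lemma one_le_rayleighSup {B A : Matrix m m ℝ} (hA : A.PosDef) {e : m → ℝ} (he : e ≠ 0)
    (hAB : e ⬝ᵥ (A *ᵥ e) ≤ e ⬝ᵥ (B *ᵥ e)) : 1 ≤ rayleighSup B A := by
  exact ((one_le_div (hA.dotProduct_mulVec_pos he)).2 hAB).trans
    (le_csSup (bddAbove_rayleigh B hA) ⟨e, he, rfl⟩)

end RayleighSup

section Smoother

variable {n : Type*} [Fintype n] [DecidableEq n]

noncomputable def symmetrizedSmoother (A M : Matrix n n ℝ) : Matrix n n ℝ :=
  M * (M + Mᵀ - A)⁻¹ * Mᵀ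

lemma isUnit_of_posDef_add_transpose_sub {A M : Matrix n n ℝ} (hA : A.PosDef)
    (hsm : (M + Mᵀ - A).PosDef) : IsUnit M := by
  rw [isUnit_iff_isUnit_det, isUnit_iff_ne_zero, Ne, ← exists_mulVec_eq_zero_iff]
  rintro ⟨v, hv, hMv⟩
  have hMtv : v ⬝ᵥ (Mᵀ *ᵥ v) = 0 := by rw [dotProduct_transpose_mulVec, hMv, dotProduct_zero]
  have hX : 0 < v ⬝ᵥ ((M + Mᵀ - A) *ᵥ v) := hsm.dotProduct_mulVec_pos hv
  have hAv : 0 < v ⬝ᵥ (A *ᵥ v) := hA.dotProduct_mulVec_pos hv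
  simp only [sub_mulVec, add_mulVec, dotProduct_sub, dotProduct_add, hMv,
    hMtv, dotProduct_zero] at hX hAv
  linarith

lemma inv_symmetrizedSmoother {A M : Matrix n n ℝ} (hX : IsUnit (M + Mᵀ - A)) :
    (symmetrizedSmoother A M)⁻¹ = Mᵀ⁻¹ * (M + Mᵀ - A) * M⁻¹ := by
  rw [symmetrizedSmoother, Matrix.mul_inv_rev, Matrix.mul_inv_rev,
    nonsing_inv_nonsing_inv _ ((isUnit_iff_isUnit_det _).mp hX), Matrix.mul_assoc]

lemma smoothing_energy_identity {A M : Matrix n n ℝ} (hA : A.IsSymm) (hM : IsUnit M)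
    (hX : IsUnit (M + Mᵀ - A)) :
    (1 - M⁻¹ * A)ᵀ * A * (1 - M⁻¹ * A) = A - A * (symmetrizedSmoother A M)⁻¹ * A := by
  have := hM.invertible
  rw [inv_symmetrizedSmoother hX]
  simp only [transpose_sub, transpose_one, transpose_mul, hA.eq, transpose_nonsing_inv,
    sub_mul, mul_sub, add_mul, mul_add, one_mul, mul_one, Matrix.mul_assoc,
    mul_inv_of_invertible, inv_mul_of_invertible]
  abel

lemma posDef_symmetrizedSmoother {A M : Matrix n n ℝ} (hM : IsUnit M)
    (hsm : (M + Mᵀ - A).PosDef) : (symmetrizedSmoother A M).PosDef := by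
  have h := hsm.inv.mul_mul_conjTranspose_same (vecMul_injective_iff_isUnit.mpr hM)
  rwa [conjTranspose_eq_transpose_of_trivial] at h

lemma posSemidef_symmetrizedSmoother_sub {A M : Matrix n n ℝ} (hA : A.IsSymm)
    (hsm : (M + Mᵀ - A).PosDef) : (symmetrizedSmoother A M - A).PosSemidef := by
  set X := M + Mᵀ - A with hX
  have := hsm.isUnit.invertible
  have hXM : symmetrizedSmoother A M - A = (M - X) * X⁻¹ * (M - X)ᵀ := by
    have hXt : Xᵀ = X := by
      rw [hX, transpose_sub, transpose_add, transpose_transpose, hA.eq, add_comm]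
    rw [transpose_sub, hXt, symmetrizedSmoother]
    simp only [sub_mul, mul_sub, one_mul, mul_one, Matrix.mul_assoc, mul_inv_of_invertible,
      inv_mul_of_invertible]
    rw [hX]
    abel
  simpa only [hXM, conjTranspose_eq_transpose_of_trivial] using
    hsm.inv.posSemidef.mul_mul_conjTranspose_same (M - X)

end Smoother

section CoarseGrid

variable {n k : Type*} [Fintype n] [Fintype k]

lemma posDef_galerkin {A : Matrix n n ℝ} (hA : A.PosDef) {P : Matrix n k ℝ}
    (hP : Function.Injective P.mulVec) : (Pᵀ * A * P).PosDef := by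
  have h := hA.conjTranspose_mul_mul_same hP
  rwa [conjTranspose_eq_transpose_of_trivial] at h

lemma mulVec_dotProduct_eq_zero_of_transpose_mulVec_eq_zero {P : Matrix n k ℝ} {w : n → ℝ}
    (hw : Pᵀ *ᵥ w = 0) (z : k → ℝ) : (P *ᵥ z) ⬝ᵥ w = 0 := by
  rw [dotProduct_comm, ← dotProduct_transpose_mulVec, hw, dotProduct_zero]

variable [DecidableEq n] [DecidableEq k]

noncomputable def coarseCorrection (A : Matrix n n ℝ) (P : Matrix n k ℝ) : Matrix n n ℝ :=
  1 - P * (Pᵀ * A * P)⁻¹ * Pᵀ * A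

lemma transpose_mulVec_mulVec_coarseCorrection {A : Matrix n n ℝ} {P : Matrix n k ℝ}
    (hAc : IsUnit (Pᵀ * A * P)) (e : n → ℝ) :
    Pᵀ *ᵥ (A *ᵥ (coarseCorrection A P *ᵥ e)) = 0 := by
  have h : Pᵀ * A * coarseCorrection A P
      = Pᵀ * A - Pᵀ * A * P * (Pᵀ * A * P)⁻¹ * (Pᵀ * A) := by
    simp only [coarseCorrection, Matrix.mul_sub, Matrix.mul_one, Matrix.mul_assoc]
  rw [mulVec_mulVec, mulVec_mulVec, h, mul_nonsing_inv _ ((isUnit_iff_isUnit_det _).mp hAc),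
    Matrix.one_mul, sub_self, zero_mulVec]

lemma energy_coarseCorrection_le {A : Matrix n n ℝ} (hA : A.PosDef) {P : Matrix n k ℝ}
    (hAc : IsUnit (Pᵀ * A * P)) (e : n → ℝ) :
    (coarseCorrection A P *ᵥ e) ⬝ᵥ (A *ᵥ (coarseCorrection A P *ᵥ e)) ≤ e ⬝ᵥ (A *ᵥ e) := by
  set v := coarseCorrection A P *ᵥ e
  set c := P *ᵥ ((Pᵀ * A * P)⁻¹ *ᵥ (Pᵀ *ᵥ (A *ᵥ e)))
  have hdecomp : v + c = e := by
    simp only [v, c, coarseCorrection, sub_mulVec, one_mulVec, mulVec_mulVec, Matrix.mul_assoc]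
    abel
  have horth : c ⬝ᵥ (A *ᵥ v) = 0 := mulVec_dotProduct_eq_zero_of_transpose_mulVec_eq_zero
    (transpose_mulVec_mulVec_coarseCorrection hAc e) _
  have hsymm := (isHermitian_iff_isSymm.mp hA.isHermitian).dotProduct_mulVec_comm v c
  have hc : 0 ≤ c ⬝ᵥ (A *ᵥ c) := hA.posSemidef.dotProduct_mulVec_nonneg c
  calc v ⬝ᵥ (A *ᵥ v) ≤ v ⬝ᵥ (A *ᵥ v) + c ⬝ᵥ (A *ᵥ c) := le_add_of_nonneg_right hc
    _ = e ⬝ᵥ (A *ᵥ e) := by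
      rw [← hdecomp]
      simp only [mulVec_add, dotProduct_add, add_dotProduct, hsymm, horth]
      ring

lemma rayleighSup_eq_zero_or_one_le {A C : Matrix n n ℝ} (hA : A.PosDef)
    (hCA : (C - A).PosSemidef) {P : Matrix n k ℝ} {R : Matrix k n ℝ} (hRP : R * P = 1) :
    rayleighSup ((1 - P * R)ᵀ * C * (1 - P * R)) A = 0
      ∨ 1 ≤ rayleighSup ((1 - P * R)ᵀ * C * (1 - P * R)) A := by
  by_cases hPR : P * R = 1
  · left
    rw [hPR, sub_self, Matrix.mul_zero, rayleighSup_zero_left]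
  right
  have hidem : IsIdempotentElem (P * R) := by
    rw [IsIdempotentElem, Matrix.mul_assoc, ← Matrix.mul_assoc R, hRP, Matrix.one_mul]
  obtain ⟨e, he, hQe⟩ := exists_ne_zero_mulVec_eq_self_of_isIdempotentElem hidem.one_sub
    (sub_ne_zero.mpr (Ne.symm hPR))
  refine one_le_rayleighSup hA he ?_
  have hCAe : 0 ≤ e ⬝ᵥ ((C - A) *ᵥ e) := hCA.dotProduct_mulVec_nonneg e
  rw [sub_mulVec, dotProduct_sub, sub_nonneg] at hCAe
  rwa [← mulVec_dotProduct_mulVec_mulVec, hQe]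

lemma twoGrid_energy_le {A M : Matrix n n ℝ} (hA : A.PosDef) (hsm : (M + Mᵀ - A).PosDef)
    {P : Matrix n k ℝ} (hP : Function.Injective P.mulVec) (R : Matrix k n ℝ) {K : ℝ}
    (hK : ∀ v, ((1 - P * R) *ᵥ v) ⬝ᵥ (symmetrizedSmoother A M *ᵥ ((1 - P * R) *ᵥ v))
      ≤ K * (v ⬝ᵥ (A *ᵥ v)))
    (hK01 : K = 0 ∨ 1 ≤ K) (e : n → ℝ) :
    (((1 - M⁻¹ * A) * coarseCorrection A P) *ᵥ e) ⬝ᵥ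
        (A *ᵥ (((1 - M⁻¹ * A) * coarseCorrection A P) *ᵥ e))
      ≤ (1 - 1 / K) * (e ⬝ᵥ (A *ᵥ e)) := by
  have hAs : A.IsSymm := isHermitian_iff_isSymm.mp hA.isHermitian
  have hAc : IsUnit (Pᵀ * A * P) := (posDef_galerkin hA hP).isUnit
  have hM := isUnit_of_posDef_add_transpose_sub hA hsm
  have hMt := posDef_symmetrizedSmoother hM hsm
  set v := coarseCorrection A P *ᵥ e
  have hsplit : ((1 - M⁻¹ * A) *ᵥ v) ⬝ᵥ (A *ᵥ ((1 - M⁻¹ * A) *ᵥ v))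
      = v ⬝ᵥ (A *ᵥ v) - (A *ᵥ v) ⬝ᵥ ((symmetrizedSmoother A M)⁻¹ *ᵥ (A *ᵥ v)) := by
    rw [mulVec_dotProduct_mulVec_mulVec,
      smoothing_energy_identity hAs hM hsm.isUnit,
      sub_mulVec, dotProduct_sub, mulVec_dotProduct_mulVec_mulVec A, hAs.eq]
  have horth : ((1 - P * R) *ᵥ v) ⬝ᵥ (A *ᵥ v) = v ⬝ᵥ (A *ᵥ v) := by
    rw [sub_mulVec, one_mulVec, sub_dotProduct, ← mulVec_mulVec,
      mulVec_dotProduct_eq_zero_of_transpose_mulVec_eq_zero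
        (transpose_mulVec_mulVec_coarseCorrection hAc e), sub_zero]
  have hcs := hMt.dotProduct_sq_le_mul_inv ((1 - P * R) *ᵥ v) (A *ᵥ v)
  rw [horth] at hcs
  rw [← mulVec_mulVec, hsplit]
  refine sub_le_one_sub_one_div_mul ?_ ?_ (energy_coarseCorrection_le hA hAc e)
    (hcs.trans (mul_le_mul_of_nonneg_right (hK v) ?_)) hK01
  · exact hA.posSemidef.dotProduct_mulVec_nonneg v
  all_goals exact hMt.inv.posSemidef.dotProduct_mulVec_nonneg (A *ᵥ v)

end CoarseGrid

theorem gamg_two_grid_convergence_bound_general {n nc : ℕ}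
    (A M : Matrix (Fin n) (Fin n) ℝ) (hA : A.PosDef)
    (hsm : (M + Mᵀ - A).PosDef)
    (Mt : Matrix (Fin n) (Fin n) ℝ)
    (hMt : Mt = M * (M + Mᵀ - A)⁻¹ * Mᵀ)
    (P : Matrix (Fin n) (Fin nc) ℝ)
    (R : Matrix (Fin nc) (Fin n) ℝ) (hRP : R * P = 1)
    (K : ℝ)
    (hK : K = sSup {r : ℝ | ∃ e : Fin n → ℝ, e ≠ 0 ∧
      r = (((1 - P * R) *ᵥ e) ⬝ᵥ (Mt *ᵥ ((1 - P * R) *ᵥ e))) / (e ⬝ᵥ (A *ᵥ e))})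
    (E : Matrix (Fin n) (Fin n) ℝ)
    (hE : E = (1 - M⁻¹ * A) * (1 - P * (Pᵀ * A * P)⁻¹ * Pᵀ * A)) :
    (sSup {r : ℝ | ∃ e : Fin n → ℝ, e ≠ 0 ∧
      r = Real.sqrt ((E *ᵥ e) ⬝ᵥ (A *ᵥ (E *ᵥ e))) / Real.sqrt (e ⬝ᵥ (A *ᵥ e))}) ^ 2
      ≤ 1 - 1 / K := by
  have hP : Function.Injective P.mulVec := fun x y hxy => by
    simpa only [mulVec_mulVec, hRP, one_mulVec] using congrArg (R *ᵥ ·) hxy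
  have hKR : K = rayleighSup ((1 - P * R)ᵀ * Mt * (1 - P * R)) A := by
    simp only [hK, rayleighSup, mulVec_dotProduct_mulVec_mulVec]
  have hK01 : K = 0 ∨ 1 ≤ K := hKR ▸ rayleighSup_eq_zero_or_one_le hA
    (hMt ▸ posSemidef_symmetrizedSmoother_sub (isHermitian_iff_isSymm.mp hA.isHermitian) hsm) hRP
  have hKbound : ∀ v, ((1 - P * R) *ᵥ v) ⬝ᵥ (Mt *ᵥ ((1 - P * R) *ᵥ v)) ≤ K * (v ⬝ᵥ (A *ᵥ v)) :=
    fun v => by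
      rw [hKR, mulVec_dotProduct_mulVec_mulVec]
      exact dotProduct_mulVec_le_rayleighSup_mul _ hA v
  subst hMt hE
  exact sq_sSup_sqrt_div_sqrt_le (one_sub_one_div_nonneg_of_eq_zero_or_one_le hK01)
    (fun e he => hA.dotProduct_mulVec_pos he)
    (fun e _ => twoGrid_energy_le hA hsm hP R hKbound hK01 e)

/-- GAMG two-grid convergence bound: with SPD `A`, invertible `M` with `M + Mᵀ − A` SPD,
symmetrized smoother `M̃`, full-column-rank `P` and `R` with `RP = I`, setting
`K = sup_{e≠0} ‖(I − PR)e‖_{M̃}² / ‖e‖_A²` and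
`E_TG = (I − M⁻¹A)(I − P(PᵀAP)⁻¹PᵀA)`, we have `‖E_TG‖_A² ≤ 1 − 1/K`. -/
theorem gamg_two_grid_convergence_bound {n nc : ℕ}
    (A M : Matrix (Fin n) (Fin n) ℝ) (hA : A.PosDef) (hM : IsUnit M)
    (hsm : (M + Mᵀ - A).PosDef)
    (Mt : Matrix (Fin n) (Fin n) ℝ)
    (hMt : Mt = M * (M + Mᵀ - A)⁻¹ * Mᵀ)
    (P : Matrix (Fin n) (Fin nc) ℝ) (hPrank : Function.Injective P.mulVec)
    (R : Matrix (Fin nc) (Fin n) ℝ) (hRP : R * P = 1)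
    (K : ℝ)
    (hK : K = sSup {r : ℝ | ∃ e : Fin n → ℝ, e ≠ 0 ∧
      r = (((1 - P * R) *ᵥ e) ⬝ᵥ (Mt *ᵥ ((1 - P * R) *ᵥ e))) / (e ⬝ᵥ (A *ᵥ e))})
    (E : Matrix (Fin n) (Fin n) ℝ)
    (hE : E = (1 - M⁻¹ * A) * (1 - P * (Pᵀ * A * P)⁻¹ * Pᵀ * A)) :
    (sSup {r : ℝ | ∃ e : Fin n → ℝ, e ≠ 0 ∧
      r = Real.sqrt ((E *ᵥ e) ⬝ᵥ (A *ᵥ (E *ᵥ e))) / Real.sqrt (e ⬝ᵥ (A *ᵥ e))}) ^ 2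
      ≤ 1 - 1 / K :=
  gamg_two_grid_convergence_bound_general A M hA hsm Mt hMt P R hRP K hK E hE
end
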